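/- arXiv:2603.00981 — 5 statements merged into one kernel-verified Lean document; each statement's English description precedes it below -/
import Mathlib

section
/- Let A be a real n×n matrix and let μ > 0 be a scalar such that every eigenvalue λ ∈ ℂ of A (i.e., every complex root of the characteristic polynomial of A) satisfies Re(λ) < −μ. Then there exists a symmetric positive definite real n×n matrix P such that AᵀP + PA ≼ −2μP, i.e., the symmetric matrix −(AᵀP + PA + 2μP) is positive semidefinite. -/
/-!
Shifting by `μ`, the matrix `B = A + μ I` has its complex spectrum in the open left half-plane.
Its Cayley transform `M = (I + B)(I - B)⁻¹` then has its spectrum in the open unit disc, so by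
Gelfand's formula `‖Mᵏ‖` decays geometrically and `P = ∑ₖ (Mᵏ)ᵀ Mᵏ` converges. This `P` is
positive definite and solves the Stein equation `Mᵀ P M = P - I`; substituting
`M (I - B) = I + B` turns the Stein equation into `-2 (Bᵀ P + P B) = (I - B)ᵀ (I - B) ≽ 0`,
and `Bᵀ P + P B = Aᵀ P + P A + 2μ P`.
-/

open Matrix Filter

-- The Frobenius norm is submultiplicative and invariant under transposition and under `ℝ → ℂ`.
attribute [local instance] Matrix.frobeniusNormedAddCommGroup Matrix.frobeniusNormedRing
  Matrix.frobeniusNormedAlgebra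

theorem Complex.norm_lt_one_of_re_div_neg {z : ℂ} (h : ((z - 1) / (z + 1)).re < 0) :
    ‖z‖ < 1 := by
  have hnum : (z - 1).re * (z + 1).re + (z - 1).im * (z + 1).im = normSq z - 1 := by
    simp only [sub_re, add_re, one_re, sub_im, add_im, one_im, normSq_apply]; ring
  rw [div_re, ← add_div, hnum, div_neg_iff] at h
  rw [← sq_lt_one_iff₀ (norm_nonneg z), ← normSq_eq_norm_sq]
  rcases h with h | h <;> linarith [h.1, h.2, normSq_nonneg (z + 1)]

namespace spectrum

theorem norm_lt_one_of_mul_one_sub_eq {R : Type*} [Ring R] [Algebra ℂ R] {b m : R}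
    (hb : ∀ z ∈ spectrum ℂ b, z.re < 0) (hm : m * (1 - b) = 1 + b) :
    ∀ z ∈ spectrum ℂ m, ‖z‖ < 1 := by
  obtain ⟨u, hu⟩ : IsUnit (1 - b) := by
    simpa [spectrum.mem_iff] using mt (hb 1) (by norm_num)
  intro z hz
  have hfactor : (algebraMap ℂ R z - m) * (1 - b) =
      algebraMap ℂ R (z - 1) - algebraMap ℂ R (z + 1) * b := by
    rw [sub_mul, hm, map_sub, map_add, map_one]; noncomm_ring
  have hnot : ¬ IsUnit (algebraMap ℂ R (z - 1) - algebraMap ℂ R (z + 1) * b) := by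
    rwa [← hfactor, ← hu, Units.isUnit_mul_units]
  have hz1 : z + 1 ≠ 0 := by
    intro h
    rw [eq_neg_of_add_eq_zero_left h] at hnot
    have h2 : IsUnit (-1 - 1 : ℂ) := isUnit_iff_ne_zero.2 (by norm_num)
    exact hnot (by simpa using h2.map (algebraMap ℂ R))
  refine Complex.norm_lt_one_of_re_div_neg (hb _ (spectrum.mem_iff.2 fun hw => hnot ?_))
  rw [← mul_div_cancel₀ (z - 1) hz1, map_mul, ← mul_sub]
  exact ((isUnit_iff_ne_zero.2 hz1).map _).mul hw

theorem exists_norm_pow_le_geometric {A : Type*} [NormedRing A] [NormedAlgebra ℂ A]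
    [CompleteSpace A] {a : A} (h : ∀ z ∈ spectrum ℂ a, ‖z‖ < 1) :
    ∃ r : ℝ, 0 ≤ r ∧ r < 1 ∧ ∀ᶠ k in atTop, ‖a ^ k‖ ≤ r ^ k := by
  have hrad : spectralRadius ℂ a < 1 := by
    rcases (spectrum ℂ a).eq_empty_or_nonempty with he | hne
    · simp [spectralRadius, he]
    · exact_mod_cast spectralRadius_lt_of_forall_lt_of_nonempty hne
        fun z hz => by exact_mod_cast h z hz
  obtain ⟨r, hrad_lt, hr1⟩ := ENNReal.lt_iff_exists_nnreal_btwn.mp hrad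
  refine ⟨r, r.coe_nonneg, by exact_mod_cast hr1, ?_⟩
  filter_upwards [(pow_nnnorm_pow_one_div_tendsto_nhds_spectralRadius a).eventually_lt_const
    hrad_lt, eventually_ge_atTop 1] with k hk hk1
  have hk0 : (k : ℝ) ≠ 0 := by positivity
  have hpow := ENNReal.rpow_le_rpow hk.le (by positivity : (0 : ℝ) ≤ k)
  rw [← ENNReal.rpow_mul, one_div, inv_mul_cancel₀ hk0, ENNReal.rpow_one,
    ENNReal.rpow_natCast] at hpow
  exact_mod_cast hpow

end spectrum

variable {ι : Type*} [Fintype ι]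

theorem HasSum.dotProduct_mulVec {X R : Type*} [CommSemiring R] [TopologicalSpace R]
    [IsTopologicalSemiring R] {f : X → Matrix ι ι R} {P : Matrix ι ι R} (h : HasSum f P)
    (x y : ι → R) : HasSum (fun k => x ⬝ᵥ (f k *ᵥ y)) (x ⬝ᵥ (P *ᵥ y)) :=
  h.map (⟨⟨fun Q => x ⬝ᵥ (Q *ᵥ y), by simp⟩, fun Q Q' => by simp [add_mulVec]⟩ :
    Matrix ι ι R →+ R) (continuous_const.dotProduct (continuous_id.matrix_mulVec continuous_const))

namespace Matrix

variable [DecidableEq ι]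

theorem ofReal_mem_spectrum_map_ofReal_iff {A : Matrix ι ι ℝ} {r : ℝ} :
    (r : ℂ) ∈ spectrum ℂ (A.map Complex.ofReal) ↔ r ∈ spectrum ℝ A := by
  rw [mem_spectrum_iff_isRoot_charpoly, mem_spectrum_iff_isRoot_charpoly,
    ← Complex.ofRealHom_eq_coe, show A.map Complex.ofReal = A.map Complex.ofRealHom from rfl,
    charpoly_map, Polynomial.isRoot_map_iff Complex.ofReal_injective]

theorem summable_transpose_pow_mul_pow {M : Matrix ι ι ℝ}
    (h : ∀ z ∈ spectrum ℂ (M.map Complex.ofReal), ‖z‖ < 1) :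
    Summable fun k : ℕ => (M ^ k)ᵀ * M ^ k := by
  obtain ⟨r, hr0, hr1, hbound⟩ := spectrum.exists_norm_pow_le_geometric h
  refine .of_norm_bounded_eventually_nat
    (summable_geometric_of_lt_one (sq_nonneg r) (by nlinarith)) ?_
  filter_upwards [hbound] with k hk
  have hnorm : ‖M ^ k‖ = ‖M.map Complex.ofReal ^ k‖ := by
    rw [← frobenius_norm_map_eq (M ^ k) Complex.ofReal Complex.norm_real]
    exact congrArg norm (Matrix.map_pow M Complex.ofRealHom k)
  calc ‖(M ^ k)ᵀ * M ^ k‖ ≤ ‖(M ^ k)ᵀ‖ * ‖M ^ k‖ := frobenius_norm_mul _ _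
    _ = ‖M ^ k‖ ^ 2 := by rw [frobenius_norm_transpose, sq]
    _ ≤ (r ^ k) ^ 2 := pow_le_pow_left₀ (norm_nonneg _) (hnorm ▸ hk) 2
    _ = (r ^ 2) ^ k := by ring

theorem exists_posDef_transpose_mul_mul_eq_sub_one {M : Matrix ι ι ℝ}
    (h : ∀ z ∈ spectrum ℂ (M.map Complex.ofReal), ‖z‖ < 1) :
    ∃ P : Matrix ι ι ℝ, P.PosDef ∧ Mᵀ * P * M = P - 1 := by
  set f : ℕ → Matrix ι ι ℝ := fun k => (M ^ k)ᵀ * M ^ k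
  obtain ⟨P, hP⟩ : ∃ P, HasSum f P := summable_transpose_pow_mul_pow h
  have hsymm : P.IsHermitian := by
    rw [isHermitian_iff_isSymm]
    refine hP.matrix_transpose.unique ?_
    simpa [f, transpose_mul] using hP
  refine ⟨P, .of_dotProduct_mulVec_pos hsymm fun x hx => ?_, ?_⟩
  · have hquad : ∀ k, x ⬝ᵥ (f k *ᵥ x) = (M ^ k *ᵥ x) ⬝ᵥ (M ^ k *ᵥ x) := fun k => by
      rw [← mulVec_mulVec, dotProduct_mulVec, vecMul_transpose]
    have hx' : 0 < x ⬝ᵥ x := by simpa using dotProduct_star_self_pos_iff.2 hx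
    refine hx'.trans_le ?_
    simpa [hquad] using le_hasSum (hP.dotProduct_mulVec x x) 0 fun k _ => by
      simpa [hquad] using dotProduct_star_self_nonneg (M ^ k *ᵥ x)
  · have hshift : HasSum (fun k => f (k + 1)) (P - 1) := by
      simpa [f] using (hasSum_nat_add_iff' 1).2 hP
    have hstep : (fun k => Mᵀ * f k * M) = fun k => f (k + 1) := funext fun k => by
      simp only [f, pow_succ, transpose_mul, Matrix.mul_assoc]
    have hconj := (hP.mul_left Mᵀ).mul_right M
    rw [hstep] at hconj
    exact hconj.unique hshift

theorem two_smul_neg_transpose_mul_add_mul_eq {R : Type*} [CommRing R]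
    {B M P : Matrix ι ι R} (hP : Mᵀ * P * M = P - 1) (hM : M * (1 - B) = 1 + B) :
    (2 : R) • -(Bᵀ * P + P * B) = (1 - B)ᵀ * (1 - B) := by
  calc (2 : R) • -(Bᵀ * P + P * B)
      = (1 - B)ᵀ * P * (1 - B) - (1 + B)ᵀ * P * (1 + B) := by
        simp only [transpose_sub, transpose_add, transpose_one, two_smul]; noncomm_ring
    _ = (1 - B)ᵀ * (P - Mᵀ * P * M) * (1 - B) := by
        rw [← hM, transpose_mul]; noncomm_ring
    _ = (1 - B)ᵀ * (1 - B) := by rw [hP, sub_sub_cancel, Matrix.mul_one]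

theorem exists_posDef_posSemidef_neg_transpose_mul_add_mul {B : Matrix ι ι ℝ}
    (hB : ∀ z ∈ spectrum ℂ (B.map Complex.ofReal), z.re < 0) :
    ∃ P : Matrix ι ι ℝ, P.PosDef ∧ (-(Bᵀ * P + P * B)).PosSemidef := by
  have hunit : IsUnit (1 - B).det := by
    have h1 : (1 : ℝ) ∉ spectrum ℝ B := fun h1 => by
      have := hB 1 (by exact_mod_cast ofReal_mem_spectrum_map_ofReal_iff.2 h1)
      norm_num at this
    simpa [spectrum.mem_iff, isUnit_iff_isUnit_det] using h1
  set M := (1 + B) * (1 - B)⁻¹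
  have hM : M * (1 - B) = 1 + B := by
    rw [Matrix.mul_assoc, nonsing_inv_mul _ hunit, Matrix.mul_one]
  have hMc : M.map Complex.ofReal * (1 - B.map Complex.ofReal) = 1 + B.map Complex.ofReal := by
    have := congrArg Complex.ofRealHom.mapMatrix hM
    simp only [map_mul, map_sub, map_add, map_one] at this
    exact this
  obtain ⟨P, hPdef, hP⟩ :=
    exists_posDef_transpose_mul_mul_eq_sub_one (spectrum.norm_lt_one_of_mul_one_sub_eq hB hMc)
  refine ⟨P, hPdef, ?_⟩
  have hpsd := posSemidef_conjTranspose_mul_self (1 - B)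
  rw [conjTranspose_eq_transpose_of_trivial, ← two_smul_neg_transpose_mul_add_mul_eq hP hM] at hpsd
  simpa using hpsd.smul (by norm_num : (0 : ℝ) ≤ 2⁻¹)

end Matrix

theorem stmt_1_general (n : ℕ) (A : Matrix (Fin n) (Fin n) ℝ) (μ : ℝ)
    (hA : ∀ lam : ℂ, (Matrix.charpoly (A.map Complex.ofReal)).IsRoot lam →
      lam.re < -μ) :
    ∃ P : Matrix (Fin n) (Fin n) ℝ, P.IsSymm ∧ P.PosDef ∧
      (-(Aᵀ * P + P * A + (2 * μ) • P)).PosSemidef := by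
  set B := A + algebraMap ℝ _ μ
  have hB : ∀ z ∈ spectrum ℂ (B.map Complex.ofReal), z.re < 0 := by
    have hBc : B.map Complex.ofReal = A.map Complex.ofReal + algebraMap ℂ _ (μ : ℂ) := by
      simp [B, Matrix.map_add, IsScalarTower.algebraMap_apply ℝ ℂ (Matrix (Fin n) (Fin n) ℂ)]
    rw [hBc, ← spectrum.add_singleton_eq, Set.add_singleton]
    rintro _ ⟨w, hw, rfl⟩
    have := hA w (mem_spectrum_iff_isRoot_charpoly.1 hw)
    simp only [Complex.add_re, Complex.ofReal_re]
    linarith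
  obtain ⟨P, hPdef, hPsd⟩ := exists_posDef_posSemidef_neg_transpose_mul_add_mul hB
  refine ⟨P, isHermitian_iff_isSymm.1 hPdef.isHermitian, hPdef, ?_⟩
  convert hPsd using 2
  simp only [B, Algebra.algebraMap_eq_smul_one, transpose_add, transpose_smul, transpose_one,
    add_mul, mul_add, smul_mul_assoc, mul_smul_comm, Matrix.one_mul, Matrix.mul_one]
  module

/-- Lyapunov inequality with prescribed decay rate (Lemma 2 of the
paper): if every complex eigenvalue of the real matrix `A` has real part `< -μ`
with `μ > 0`, then there is a symmetric positive definite `P` with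
`Aᵀ P + P A ≼ -2μ P`. -/
theorem stmt_1 (n : ℕ) (A : Matrix (Fin n) (Fin n) ℝ) (μ : ℝ) (hμ : 0 < μ)
    (hA : ∀ lam : ℂ, (Matrix.charpoly (A.map Complex.ofReal)).IsRoot lam →
      lam.re < -μ) :
    ∃ P : Matrix (Fin n) (Fin n) ℝ, P.IsSymm ∧ P.PosDef ∧
      (-(Aᵀ * P + P * A + (2 * μ) • P)).PosSemidef :=
  stmt_1_general n A μ hA
end

section
/- Let P be a symmetric positive definite real n×n matrix, A a real n×n matrix, G a real n×r matrix, H₁ a real s×n matrix, and μ, η, γ_f > 0 scalars. Suppose the symmetric (n+r)×(n+r) block matrix [[AᵀP + PA + 2μP + η·γ_f²·H₁ᵀH₁, P·G], [GᵀP, −η·I_r]] is negative definite. Then for every e ∈ ℝⁿ with e ≠ 0 and every f ∈ ℝʳ with ‖f‖ ≤ γ_f·‖H₁·e‖, one has eᵀ(AᵀP + PA)e + 2·eᵀP·G·f < 0. -/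
/-!
Evaluate the negative definite block form at `(e, f)`: the cross terms give `2 eᵀPGf`, and the
terms that are dropped, `2μ eᵀPe` and `η (γ_f² ‖H₁e‖² - ‖f‖²)`, are nonnegative because `P` is
positive definite and `f` satisfies the Lipschitz bound.
-/

open Matrix

section BlockQuadraticForm

variable {m n R : Type*} [Fintype m] [Fintype n] [CommRing R]

theorem sumElim_dotProduct_fromBlocks_transpose_mulVec (A : Matrix m m R) (B : Matrix m n R)
    (D : Matrix n n R) (e : m → R) (f : n → R) :
    Sum.elim e f ⬝ᵥ fromBlocks A B Bᵀ D *ᵥ Sum.elim e f =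
      e ⬝ᵥ A *ᵥ e + 2 * (e ⬝ᵥ B *ᵥ f) + f ⬝ᵥ D *ᵥ f := by
  rw [fromBlocks_mulVec, Sum.elim_comp_inl, Sum.elim_comp_inr, sumElim_dotProduct_sumElim,
    dotProduct_add, dotProduct_add, dotProduct_mulVec f Bᵀ, vecMul_transpose,
    dotProduct_comm (B *ᵥ f)]
  ring

theorem dotProduct_transpose_mul_mulVec (H : Matrix m n R) (e : n → R) :
    e ⬝ᵥ (Hᵀ * H) *ᵥ e = H *ᵥ e ⬝ᵥ H *ᵥ e := by
  rw [← mulVec_mulVec, dotProduct_mulVec, vecMul_transpose]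

end BlockQuadraticForm

theorem dotProduct_self_le_sq_mul_of_sqrt_le {ι κ : Type*} [Fintype ι] [Fintype κ]
    {f : ι → ℝ} {g : κ → ℝ} {c : ℝ}
    (h : √(∑ i, f i ^ 2) ≤ c * √(∑ i, g i ^ 2)) :
    f ⬝ᵥ f ≤ c ^ 2 * (g ⬝ᵥ g) := by
  have hsq := pow_le_pow_left₀ (Real.sqrt_nonneg _) h 2
  rw [mul_pow, Real.sq_sqrt (by positivity), Real.sq_sqrt (by positivity)] at hsq
  simpa only [dotProduct, sq] using hsq

theorem stmt_7_general (n r s : ℕ)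
    (P A : Matrix (Fin n) (Fin n) ℝ) (G : Matrix (Fin n) (Fin r) ℝ)
    (H₁ : Matrix (Fin s) (Fin n) ℝ)
    (hPsymm : P.IsSymm) (hP : P.PosDef)
    (μ η γf : ℝ) (hμ : 0 < μ) (hη : 0 < η)
    (hLMI : (-(Matrix.fromBlocks
        (Aᵀ * P + P * A + (2 * μ) • P + (η * γf ^ 2) • (H₁ᵀ * H₁))
        (P * G)
        (Gᵀ * P)
        (-(η • (1 : Matrix (Fin r) (Fin r) ℝ))))).PosDef) :
    ∀ (e : Fin n → ℝ) (f : Fin r → ℝ), e ≠ 0 →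
      Real.sqrt (∑ i, f i ^ 2) ≤
        γf * Real.sqrt (∑ i, H₁.mulVec e i ^ 2) →
      e ⬝ᵥ (Aᵀ * P + P * A).mulVec e + 2 * (e ⬝ᵥ (P * G).mulVec f) < 0 := by
  intro e f he hf
  have hx : Sum.elim e f ≠ 0 := fun h => he (funext fun i => congrFun h (Sum.inl i))
  have hPG : (P * G)ᵀ = Gᵀ * P := by rw [transpose_mul, hPsymm.eq]
  have hform := hLMI.dotProduct_mulVec_pos hx
  rw [star_trivial, neg_mulVec, dotProduct_neg, ← hPG, sumElim_dotProduct_fromBlocks_transpose_mulVec] at hform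
  simp only [add_mulVec, dotProduct_add, smul_mulVec, dotProduct_smul, smul_eq_mul,
    dotProduct_transpose_mul_mulVec, neg_mulVec, dotProduct_neg, one_mulVec] at hform ⊢
  have hPe : 0 < μ * (e ⬝ᵥ P *ᵥ e) := mul_pos hμ (hP.dotProduct_mulVec_pos he)
  have hsector : η * (f ⬝ᵥ f) ≤ η * γf ^ 2 * (H₁ *ᵥ e ⬝ᵥ H₁ *ᵥ e) := by
    rw [mul_assoc]
    exact mul_le_mul_of_nonneg_left (dotProduct_self_le_sq_mul_of_sqrt_le hf) hη.le
  linarith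

/-- First part of the proof of Theorem 1 of the paper: if the
symmetric block matrix
`[[AᵀP + PA + 2μP + ηγ_f²H₁ᵀH₁, PG], [GᵀP, -ηI]]` is negative definite, then
for every `e ≠ 0` and every `f` with `‖f‖ ≤ γ_f ‖H₁ e‖` (Euclidean norms),
`eᵀ(AᵀP + PA)e + 2 eᵀ P G f < 0`. -/
theorem stmt_7 (n r s : ℕ)
    (P A : Matrix (Fin n) (Fin n) ℝ) (G : Matrix (Fin n) (Fin r) ℝ)
    (H₁ : Matrix (Fin s) (Fin n) ℝ)
    (hPsymm : P.IsSymm) (hP : P.PosDef)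
    (μ η γf : ℝ) (hμ : 0 < μ) (hη : 0 < η) (hγf : 0 < γf)
    (hLMI : (-(Matrix.fromBlocks
        (Aᵀ * P + P * A + (2 * μ) • P + (η * γf ^ 2) • (H₁ᵀ * H₁))
        (P * G)
        (Gᵀ * P)
        (-(η • (1 : Matrix (Fin r) (Fin r) ℝ))))).PosDef) :
    ∀ (e : Fin n → ℝ) (f : Fin r → ℝ), e ≠ 0 →
      Real.sqrt (∑ i, f i ^ 2) ≤
        γf * Real.sqrt (∑ i, H₁.mulVec e i ^ 2) →
      e ⬝ᵥ (Aᵀ * P + P * A).mulVec e + 2 * (e ⬝ᵥ (P * G).mulVec f) < 0 :=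
  stmt_7_general n r s P A G H₁ hPsymm hP μ η γf hμ hη hLMI
end

section
/- Let P be a symmetric positive definite real n×n matrix, A a real n×n matrix, G a real n×r matrix, H₁ a real s×n matrix, and μ, η, γ_f > 0 scalars such that the symmetric (n+r)×(n+r) block matrix [[AᵀP + PA + 2μP + η·γ_f²·H₁ᵀH₁, P·G], [GᵀP, −η·I_r]] is negative definite. Let e : ℝ → ℝⁿ be differentiable and f : ℝ → ℝʳ be such that for all t ≥ 0: e′(t) = A·e(t) + G·f(t) and ‖f(t)‖ ≤ γ_f·‖H₁·e(t)‖. Then e(t) → 0 as t → +∞. -/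
/-!
`V(e) = eᵀ P e` is a Lyapunov function. Testing the negative definite block matrix against the
vector `(e, f)` and adding the nonnegative sector term `η (γ_f² ‖H₁ e‖² - ‖f‖²)` gives
`V' ≤ -2μ V` along trajectories, so `V(t) ≤ V(0) e^{-2μt}` by Grönwall. Since `P` is positive
definite, `c ‖e‖² ≤ V` for some `c > 0`, hence `e(t) → 0`.
-/

open Matrix Filter Topology

theorem exists_pos_mul_norm_sq_le {E : Type*} [NormedAddCommGroup E] [NormedSpace ℝ E]
    [ProperSpace E] {Q : E → ℝ} (hQ : Continuous Q) (hsmul : ∀ (a : ℝ) x, Q (a • x) = a ^ 2 * Q x)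
    (hpos : ∀ x ≠ 0, 0 < Q x) : ∃ c > 0, ∀ x, c * ‖x‖ ^ 2 ≤ Q x := by
  have hQ0 : Q 0 = 0 := by simpa using hsmul 0 0
  rcases subsingleton_or_nontrivial E with hE | hE
  · exact ⟨1, one_pos, fun x => by simp [Subsingleton.elim x 0, hQ0]⟩
  obtain ⟨u, hu, hmin⟩ := (isCompact_sphere (0 : E) 1).exists_isMinOn
    (NormedSpace.sphere_nonempty.2 zero_le_one) hQ.continuousOn
  refine ⟨Q u, hpos u (ne_zero_of_mem_unit_sphere ⟨u, hu⟩), fun x => ?_⟩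
  rcases eq_or_ne x 0 with rfl | hx
  · simp [hQ0]
  have hx' : ‖x‖⁻¹ • x ∈ Metric.sphere (0 : E) 1 := by
    simp [norm_smul, norm_ne_zero_iff.2 hx]
  calc Q u * ‖x‖ ^ 2 ≤ Q (‖x‖⁻¹ • x) * ‖x‖ ^ 2 := by gcongr; exact hmin hx'
    _ = Q x := by rw [hsmul]; field_simp

theorem Matrix.PosDef.exists_pos_mul_norm_sq_le {m : Type*} [Fintype m] {P : Matrix m m ℝ}
    (hP : P.PosDef) : ∃ c > 0, ∀ x, c * ‖x‖ ^ 2 ≤ x ⬝ᵥ P *ᵥ x :=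
  _root_.exists_pos_mul_norm_sq_le (Q := fun x => x ⬝ᵥ P *ᵥ x)
    (continuous_id.dotProduct (continuous_const.matrix_mulVec continuous_id))
    (fun a x => by simp only [mulVec_smul, smul_dotProduct, dotProduct_smul, smul_eq_mul]; ring)
    fun x hx => by simpa using hP.dotProduct_mulVec_pos hx

theorem Matrix.IsSymm.dotProduct_mulVec_comm {m : Type*} [Fintype m] {P : Matrix m m ℝ}
    (hP : P.IsSymm) (u v : m → ℝ) : u ⬝ᵥ P *ᵥ v = v ⬝ᵥ P *ᵥ u := by
  simpa only [hP.eq] using dotProduct_transpose_mulVec P u v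

theorem Matrix.dotProduct_transpose_mulVec_eq_mulVec_dotProduct {α m k : Type*} [CommSemiring α]
    [Fintype m] [Fintype k] (B : Matrix k m α) (x : m → α) (z : k → α) :
    x ⬝ᵥ Bᵀ *ᵥ z = B *ᵥ x ⬝ᵥ z := by
  rw [dotProduct_mulVec, vecMul_transpose]

theorem Matrix.sumElim_dotProduct_fromBlocks_mulVec {α m k : Type*} [Fintype m] [Fintype k]
    [NonUnitalNonAssocSemiring α] (A : Matrix m m α) (B : Matrix m k α) (C : Matrix k m α)
    (D : Matrix k k α) (x : m → α) (y : k → α) :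
    Sum.elim x y ⬝ᵥ fromBlocks A B C D *ᵥ Sum.elim x y =
      x ⬝ᵥ A *ᵥ x + x ⬝ᵥ B *ᵥ y + (y ⬝ᵥ C *ᵥ x + y ⬝ᵥ D *ᵥ y) := by
  simp only [fromBlocks_mulVec, Sum.elim_comp_inl, Sum.elim_comp_inr, sumElim_dotProduct_sumElim,
    dotProduct_add]

theorem two_mul_dotProduct_mulVec_le_of_negSemidef_fromBlocks {m k l : Type*} [Fintype m]
    [Fintype k] [Fintype l] [DecidableEq k] {P A : Matrix m m ℝ} {G : Matrix m k ℝ}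
    {H : Matrix l m ℝ} {μ η γ : ℝ} (hP : P.IsSymm) (hη : 0 ≤ η)
    (hLMI : (-(fromBlocks (Aᵀ * P + P * A + (2 * μ) • P + (η * γ ^ 2) • (Hᵀ * H)) (P * G)
      (Gᵀ * P) (-(η • (1 : Matrix k k ℝ))))).PosSemidef)
    {x : m → ℝ} {y : k → ℝ} (hy : y ⬝ᵥ y ≤ γ ^ 2 * (H *ᵥ x ⬝ᵥ H *ᵥ x)) :
    2 * (x ⬝ᵥ P *ᵥ (A *ᵥ x + G *ᵥ y)) ≤ -(2 * μ) * (x ⬝ᵥ P *ᵥ x) := by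
  have hneg := hLMI.dotProduct_mulVec_nonneg (Sum.elim x y)
  rw [star_trivial, neg_mulVec, dotProduct_neg, sumElim_dotProduct_fromBlocks_mulVec] at hneg
  simp only [add_mulVec, smul_mulVec, neg_mulVec, one_mulVec, dotProduct_add, dotProduct_smul,
    dotProduct_neg, smul_eq_mul, ← mulVec_mulVec,
    dotProduct_transpose_mulVec_eq_mulVec_dotProduct] at hneg
  rw [hP.dotProduct_mulVec_comm (A *ᵥ x), hP.dotProduct_mulVec_comm (G *ᵥ y)] at hneg
  rw [mulVec_add, dotProduct_add]
  linarith [mul_le_mul_of_nonneg_left hy hη]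

theorem HasDerivAt.dotProduct {m : Type*} [Fintype m] {u v : ℝ → m → ℝ} {u' v' : m → ℝ} {t : ℝ}
    (hu : HasDerivAt u u' t) (hv : HasDerivAt v v' t) :
    HasDerivAt (fun t => u t ⬝ᵥ v t) (u' ⬝ᵥ v t + u t ⬝ᵥ v') t := by
  have h : HasDerivAt (fun s => ∑ i, u s i * v s i) (∑ i, (u' i * v t i + u t i * v' i)) t :=
    HasDerivAt.fun_sum fun i _ => (hasDerivAt_pi.1 hu i).fun_mul (hasDerivAt_pi.1 hv i)
  rw [Finset.sum_add_distrib] at h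
  exact h

theorem HasDerivAt.mulVec {m k : Type*} [Fintype m] [Fintype k] (P : Matrix m k ℝ)
    {u : ℝ → k → ℝ} {u' : k → ℝ} {t : ℝ} (hu : HasDerivAt u u' t) :
    HasDerivAt (fun t => P *ᵥ u t) (P *ᵥ u') t := by
  have h := (mulVecLin P).toContinuousLinearMap.hasFDerivAt (x := u t) |>.comp_hasDerivAt t hu
  exact h

theorem hasDerivAt_dotProduct_mulVec_self {m : Type*} [Fintype m] {P : Matrix m m ℝ}
    (hP : P.IsSymm) {u : ℝ → m → ℝ} {u' : m → ℝ} {t : ℝ} (hu : HasDerivAt u u' t) :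
    HasDerivAt (fun t => u t ⬝ᵥ P *ᵥ u t) (2 * (u t ⬝ᵥ P *ᵥ u')) t := by
  convert hu.dotProduct (hu.mulVec P) using 1
  rw [hP.dotProduct_mulVec_comm u', two_mul]

theorem le_mul_exp_of_deriv_le_mul {V V' : ℝ → ℝ} {K : ℝ}
    (hV : ∀ t ≥ 0, HasDerivAt V (V' t) t) (hV' : ∀ t ≥ 0, V' t ≤ K * V t) {t : ℝ} (ht : 0 ≤ t) :
    V t ≤ V 0 * Real.exp (K * t) := by
  have h := le_gronwallBound_of_liminf_deriv_right_le (f := V) (f' := V') (δ := V 0) (K := K)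
    (ε := 0) (a := 0) (b := t) (fun s hs => (hV s hs.1).continuousAt.continuousWithinAt)
    (fun s hs _ hr => (hV s hs.1).hasDerivWithinAt.liminf_right_slope_le hr) le_rfl
    (fun s hs => by simpa using hV' s hs.1) t ⟨ht, le_rfl⟩
  simpa [gronwallBound_ε0] using h

theorem tendsto_nhds_zero_of_mul_norm_sq_le {α E : Type*} [NormedAddCommGroup E] {l : Filter α}
    {x : α → E} {W : α → ℝ} {c : ℝ} (hc : 0 < c) (hW : Tendsto W l (𝓝 0))
    (hx : ∀ᶠ a in l, c * ‖x a‖ ^ 2 ≤ W a) : Tendsto x l (𝓝 0) := by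
  have hsq : Tendsto (fun a => ‖x a‖ ^ 2) l (𝓝 0) :=
    squeeze_zero' (.of_forall fun a => by positivity)
      (hx.mono fun a ha => (le_div_iff₀' hc).2 ha) (by simpa using hW.div_const c)
  refine tendsto_zero_iff_norm_tendsto_zero.2 ?_
  simpa [Real.sqrt_sq (norm_nonneg _)] using hsq.sqrt

theorem stmt_8_general (n r s : ℕ)
    (P A : Matrix (Fin n) (Fin n) ℝ) (G : Matrix (Fin n) (Fin r) ℝ)
    (H₁ : Matrix (Fin s) (Fin n) ℝ)
    (hP : P.PosDef)
    (μ η γf : ℝ) (hμ : 0 < μ) (hη : 0 < η)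
    (hLMI : (-(Matrix.fromBlocks
        (Aᵀ * P + P * A + (2 * μ) • P + (η * γf ^ 2) • (H₁ᵀ * H₁))
        (P * G)
        (Gᵀ * P)
        (-(η • (1 : Matrix (Fin r) (Fin r) ℝ))))).PosDef)
    (e : ℝ → Fin n → ℝ) (f : ℝ → Fin r → ℝ)
    (he : Differentiable ℝ e)
    (hode : ∀ t ≥ (0 : ℝ), deriv e t = A.mulVec (e t) + G.mulVec (f t))
    (hf : ∀ t ≥ (0 : ℝ), Real.sqrt (∑ i, f t i ^ 2) ≤
      γf * Real.sqrt (∑ i, H₁.mulVec (e t) i ^ 2)) :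
    Filter.Tendsto e Filter.atTop (nhds 0) := by
  have hPsymm : P.IsSymm := isHermitian_iff_isSymm.1 hP.isHermitian
  set V : ℝ → ℝ := fun t => e t ⬝ᵥ P *ᵥ e t
  have hf_sq : ∀ t ≥ (0 : ℝ), f t ⬝ᵥ f t ≤ γf ^ 2 * (H₁ *ᵥ e t ⬝ᵥ H₁ *ᵥ e t) := fun t ht => by
    have := pow_le_pow_left₀ (Real.sqrt_nonneg _) (hf t ht) 2
    rw [mul_pow, Real.sq_sqrt (by positivity), Real.sq_sqrt (by positivity)] at this
    simpa only [dotProduct, sq] using this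
  have hV_deriv : ∀ t, HasDerivAt V (2 * (e t ⬝ᵥ P *ᵥ deriv e t)) t :=
    fun t => hasDerivAt_dotProduct_mulVec_self hPsymm (he t).hasDerivAt
  have hV_dissip : ∀ t ≥ (0 : ℝ), 2 * (e t ⬝ᵥ P *ᵥ deriv e t) ≤ -(2 * μ) * V t := fun t ht => by
    rw [hode t ht]
    exact two_mul_dotProduct_mulVec_le_of_negSemidef_fromBlocks hPsymm hη.le hLMI.posSemidef
      (hf_sq t ht)
  have hV_le : ∀ t ≥ (0 : ℝ), V t ≤ V 0 * Real.exp (-(2 * μ) * t) :=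
    fun _ ht => le_mul_exp_of_deriv_le_mul (fun t _ => hV_deriv t) hV_dissip ht
  obtain ⟨c, hc, hcV⟩ := hP.exists_pos_mul_norm_sq_le
  have hexp : Tendsto (fun t => V 0 * Real.exp (-(2 * μ) * t)) atTop (𝓝 0) := by
    simpa using (Real.tendsto_exp_atBot.comp
      (tendsto_id.const_mul_atTop_of_neg (show -(2 * μ) < 0 by linarith))).const_mul (V 0)
  exact tendsto_nhds_zero_of_mul_norm_sq_le hc hexp
    ((eventually_ge_atTop 0).mono fun t ht => (hcV (e t)).trans (hV_le t ht))

/-- Asymptotic stability conclusion of Theorem 1 of the paper: if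
the LMI block matrix is negative definite and the observer error obeys
`e′ = A e + G f` with the Lipschitz bound `‖f(t)‖ ≤ γ_f ‖H₁ e(t)‖` (Euclidean
norms) for all `t ≥ 0`, then `e(t) → 0` as `t → +∞`. -/
theorem stmt_8 (n r s : ℕ)
    (P A : Matrix (Fin n) (Fin n) ℝ) (G : Matrix (Fin n) (Fin r) ℝ)
    (H₁ : Matrix (Fin s) (Fin n) ℝ)
    (hPsymm : P.IsSymm) (hP : P.PosDef)
    (μ η γf : ℝ) (hμ : 0 < μ) (hη : 0 < η) (hγf : 0 < γf)
    (hLMI : (-(Matrix.fromBlocks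
        (Aᵀ * P + P * A + (2 * μ) • P + (η * γf ^ 2) • (H₁ᵀ * H₁))
        (P * G)
        (Gᵀ * P)
        (-(η • (1 : Matrix (Fin r) (Fin r) ℝ))))).PosDef)
    (e : ℝ → Fin n → ℝ) (f : ℝ → Fin r → ℝ)
    (he : Differentiable ℝ e)
    (hode : ∀ t ≥ (0 : ℝ), deriv e t = A.mulVec (e t) + G.mulVec (f t))
    (hf : ∀ t ≥ (0 : ℝ), Real.sqrt (∑ i, f t i ^ 2) ≤
      γf * Real.sqrt (∑ i, H₁.mulVec (e t) i ^ 2)) :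
    Filter.Tendsto e Filter.atTop (nhds 0) :=
  stmt_8_general n r s P A G H₁ hP μ η γf hμ hη hLMI e f he hode hf
end

section
/- Let n, r, ℓ, q be positive integers, Φ ∈ ℝ^{n×n}, M ∈ ℝ^{n×r}, H₁ ∈ ℝ^{n×ℓ}, H₂ ∈ ℝ^{q×ℓ}, and let γ_f, D̄₁, K ≥ 0 and μ, c₁ > 0 with μ ≠ c₁. Let P be a symmetric positive definite n×n matrix with ΦᵀP + PΦ ≼ −2μP. Let x : ℝ → ℝⁿ be differentiable, e : ℝ → ℝ^ℓ, f : ℝ → ℝʳ, and D : ℝ → ℝ^{r×q} a matrix-valued function, such that for every t ≥ 0: x′(t) = Φ·(x(t) − H₁·e(t)) + M·f(t) + M·D(t)·H₂·e(t), ‖f(t)‖ ≤ γ_f·‖H₁·e(t)‖, ‖D(t)‖ ≤ D̄₁, and ‖e(t)‖² ≤ K·exp(−c₁·t). Then x(t) → 0 as t → +∞, and moreover there exists a constant C ≥ 0 such that ‖x(t)‖² ≤ C·(exp(−μ·t) + exp(−c₁·t)) for all t ≥ 0. -/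
open Matrix

/-- The spectral (operator 2-) norm of a real matrix, i.e. the operator norm of
the induced linear map between Euclidean spaces. -/
noncomputable def specNorm {m n : ℕ} (M : Matrix (Fin m) (Fin n) ℝ) : ℝ :=
  ‖LinearMap.toContinuousLinearMap (Matrix.toEuclideanLin M)‖

noncomputable def eN {n : ℕ} (v : Fin n → ℝ) : ℝ := Real.sqrt (∑ i, v i ^ 2)

lemma eN_eq_norm {n : ℕ} (v : Fin n → ℝ) :
    eN v = ‖(WithLp.equiv 2 (Fin n → ℝ)).symm v‖ := by
  rw [EuclideanSpace.norm_eq]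
  simp [eN, sq_abs]

lemma eN_nonneg {n : ℕ} (v : Fin n → ℝ) : 0 ≤ eN v := Real.sqrt_nonneg _

lemma sq_eN {n : ℕ} (v : Fin n → ℝ) : eN v ^ 2 = ∑ i, v i ^ 2 := by
  rw [eN, Real.sq_sqrt]; positivity

lemma specNorm_nonneg {m n : ℕ} (A : Matrix (Fin m) (Fin n) ℝ) : 0 ≤ specNorm A :=
  norm_nonneg _

lemma eN_mulVec_le {m n : ℕ} (A : Matrix (Fin m) (Fin n) ℝ) (v : Fin n → ℝ) :
    eN (A.mulVec v) ≤ specNorm A * eN v := by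
  rw [eN_eq_norm, eN_eq_norm]
  have := (LinearMap.toContinuousLinearMap (Matrix.toEuclideanLin A)).le_opNorm
    ((WithLp.equiv 2 (Fin n → ℝ)).symm v)
  simpa [Matrix.toEuclideanLin_apply_piLp_toLp, specNorm] using this

lemma abs_dot_le {n : ℕ} (a b : Fin n → ℝ) : |a ⬝ᵥ b| ≤ eN a * eN b := by
  rw [eN_eq_norm, eN_eq_norm]
  have := abs_real_inner_le_norm ((WithLp.equiv 2 (Fin n → ℝ)).symm a)
    ((WithLp.equiv 2 (Fin n → ℝ)).symm b)
  simpa [PiLp.inner_apply, dotProduct, mul_comm] using this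

lemma eN_add3_sub {n : ℕ} (a b c : Fin n → ℝ) : eN (a + b - c) ≤ eN a + eN b + eN c := by
  simp only [eN_eq_norm, WithLp.toLp_sub, WithLp.toLp_add]
  exact le_trans (norm_sub_le _ _) (add_le_add (norm_add_le _ _) le_rfl)

lemma posdef_lb {n : ℕ} (hn : 0 < n) {P : Matrix (Fin n) (Fin n) ℝ} (hP : P.PosDef) :
    ∃ m : ℝ, 0 < m ∧ ∀ v : Fin n → ℝ, m * (∑ i, v i ^ 2) ≤ v ⬝ᵥ P.mulVec v := by
  haveI : Nonempty (Fin n) := ⟨⟨0, hn⟩⟩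
  set T := LinearMap.toContinuousLinearMap (Matrix.toEuclideanLin P) with hT
  set g : EuclideanSpace ℝ (Fin n) → ℝ := fun u => inner ℝ u (T u) with hg
  have key : ∀ u : EuclideanSpace ℝ (Fin n),
      g u = (WithLp.equiv 2 (Fin n → ℝ) u) ⬝ᵥ P.mulVec (WithLp.equiv 2 (Fin n → ℝ) u) := by
    intro u
    simp [hg, hT, PiLp.inner_apply, Matrix.toEuclideanLin_apply, dotProduct, mul_comm]
  have hgc : Continuous g := continuous_id.inner T.continuous
  have hne : (Metric.sphere (0 : EuclideanSpace ℝ (Fin n)) 1).Nonempty :=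
    NormedSpace.sphere_nonempty.2 zero_le_one
  obtain ⟨u₀, hu₀, hmin⟩ := (isCompact_sphere (0 : EuclideanSpace ℝ (Fin n)) 1).exists_isMinOn
    hne hgc.continuousOn
  have hu₀ne : u₀ ≠ 0 := by
    intro h
    simp [h] at hu₀
  have hm : 0 < g u₀ := by
    rw [key]
    have := hP.dotProduct_mulVec_pos (x := WithLp.equiv 2 (Fin n → ℝ) u₀) (by
      intro h
      exact hu₀ne ((WithLp.equiv 2 (Fin n → ℝ)).injective (by simpa using h)))
    simpa using this
  refine ⟨g u₀, hm, fun v => ?_⟩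
  set w : EuclideanSpace ℝ (Fin n) := (WithLp.equiv 2 (Fin n → ℝ)).symm v with hw
  have hsum : ∑ i, v i ^ 2 = ‖w‖ ^ 2 := by
    rw [EuclideanSpace.norm_eq, Real.sq_sqrt (by positivity)]
    simp [hw, sq_abs]
  by_cases hv : w = 0
  · have : v = 0 := by simpa [hw] using hv
    simp [this, hv, hsum]
  · have hnw : (0:ℝ) < ‖w‖ := norm_pos_iff.2 hv
    have husph : ‖w‖⁻¹ • w ∈ Metric.sphere (0 : EuclideanSpace ℝ (Fin n)) 1 := by
      simp [norm_smul, abs_of_pos (inv_pos.2 hnw), inv_mul_cancel₀ hnw.ne']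
    have h1 : g u₀ ≤ g (‖w‖⁻¹ • w) := hmin husph
    have h2 : g (‖w‖⁻¹ • w) = ‖w‖⁻¹ ^ 2 * g w := by
      simp only [hg, T.map_smul, real_inner_smul_left, real_inner_smul_right]
      ring
    have h3 : g w = v ⬝ᵥ P.mulVec v := by
      rw [key]; simp [hw]
    have := mul_le_mul_of_nonneg_right h1 (le_of_lt (by positivity : (0:ℝ) < ‖w‖ ^ 2))
    rw [hsum]
    calc g u₀ * ‖w‖ ^ 2 ≤ ‖w‖⁻¹ ^ 2 * g w * ‖w‖ ^ 2 := by rw [← h2]; exact this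
      _ = v ⬝ᵥ P.mulVec v := by
          rw [h3]; field_simp

lemma dot_symm {n : ℕ} {P : Matrix (Fin n) (Fin n) ℝ} (hP : P.IsSymm)
    (a b : Fin n → ℝ) : a ⬝ᵥ P.mulVec b = b ⬝ᵥ P.mulVec a := by
  rw [Matrix.dotProduct_mulVec, ← Matrix.mulVec_transpose, hP.eq, dotProduct_comm]

lemma hasDerivAt_quadratic {n : ℕ} (P : Matrix (Fin n) (Fin n) ℝ)
    (x : ℝ → Fin n → ℝ) (hx : Differentiable ℝ x) (t : ℝ) :
    HasDerivAt (fun s => x s ⬝ᵥ P.mulVec (x s))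
      (deriv x t ⬝ᵥ P.mulVec (x t) + x t ⬝ᵥ P.mulVec (deriv x t)) t := by
  have hxi : ∀ i, HasDerivAt (fun s => x s i) (deriv x t i) t :=
    hasDerivAt_pi.1 (hx t).hasDerivAt
  have h : ∀ i : Fin n, HasDerivAt (fun s => x s i * ∑ j, P i j * x s j)
      (deriv x t i * (∑ j, P i j * x t j) + x t i * (∑ j, P i j * deriv x t j)) t := by
    intro i
    exact (hxi i).mul (HasDerivAt.fun_sum fun j _ => (hxi j).const_mul (P i j))
  have := HasDerivAt.fun_sum (fun i (_ : i ∈ Finset.univ) => h i)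
  have goalfun : (fun s => x s ⬝ᵥ P.mulVec (x s))
      = (fun s => ∑ i, x s i * ∑ j, P i j * x s j) := by
    funext s; simp [dotProduct, Matrix.mulVec]
  rw [goalfun]
  refine this.congr_deriv ?_
  simp [dotProduct, Matrix.mulVec, Finset.sum_add_distrib]

lemma gronwall_aux (μ c₁ B : ℝ) (hμ : 0 < μ) (hμc : μ ≠ c₁) (V : ℝ → ℝ)
    (hV : Differentiable ℝ V)
    (hd : ∀ t > (0:ℝ), deriv V t ≤ -μ * V t + B * Real.exp (-c₁ * t)) :
    ∀ t ≥ (0:ℝ), V t ≤ (|V 0 - B/(μ-c₁)| + |B/(μ-c₁)|) *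
      (Real.exp (-μ*t) + Real.exp (-c₁*t)) := by
  set β := B / (μ - c₁) with hβ
  have hμc' : μ - c₁ ≠ 0 := sub_ne_zero.2 hμc
  set G : ℝ → ℝ := fun t => V t * Real.exp (μ*t) - β * Real.exp ((μ-c₁)*t) with hG
  have hGd : ∀ t, HasDerivAt G
      ((deriv V t + μ * V t) * Real.exp (μ*t) - β*(μ-c₁)*Real.exp ((μ-c₁)*t)) t := by
    intro t
    have h1 : HasDerivAt (fun s => Real.exp (μ*s)) (Real.exp (μ*t) * μ) t := by
      simpa using ((hasDerivAt_id t).const_mul μ).exp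
    have h2 : HasDerivAt (fun s => Real.exp ((μ-c₁)*s)) (Real.exp ((μ-c₁)*t) * (μ-c₁)) t := by
      simpa using ((hasDerivAt_id t).const_mul (μ-c₁)).exp
    have := ((hV t).hasDerivAt.mul h1).sub (h2.const_mul β)
    refine this.congr_deriv ?_
    ring
  have hAnti : AntitoneOn G (Set.Ici 0) := by
    apply antitoneOn_of_deriv_nonpos (convex_Ici 0)
      (fun t _ => ((hGd t).continuousAt).continuousWithinAt)
      (fun t _ => ((hGd t).differentiableAt).differentiableWithinAt)
    intro t ht
    rw [interior_Ici] at ht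
    rw [(hGd t).deriv]
    have hd' := hd t ht
    have hexp : Real.exp (-c₁*t) * Real.exp (μ*t) = Real.exp ((μ-c₁)*t) := by
      rw [← Real.exp_add]; ring_nf
    have hβB : β * (μ - c₁) * Real.exp ((μ-c₁)*t) = B * Real.exp ((μ-c₁)*t) := by
      rw [div_mul_cancel₀ B hμc']
    have key : deriv V t * Real.exp (μ*t) ≤ (-μ * V t + B * Real.exp (-c₁*t)) * Real.exp (μ*t) :=
      mul_le_mul_of_nonneg_right hd' (Real.exp_pos _).le
    have key2 : (-μ * V t + B * Real.exp (-c₁*t)) * Real.exp (μ*t)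
        = -μ * V t * Real.exp (μ*t) + B * Real.exp ((μ-c₁)*t) := by
      rw [← hexp]; ring
    nlinarith [key, key2, hβB]
  intro t ht
  have hGt : G t ≤ G 0 := hAnti (Set.self_mem_Ici) ht ht
  have hG0 : G 0 = V 0 - β := by simp [hG]
  have hVt : V t * Real.exp (μ*t) ≤ (V 0 - β) + β * Real.exp ((μ-c₁)*t) := by
    have := hGt
    rw [hG0] at this
    simp only [hG] at this
    linarith
  have hme : Real.exp ((μ-c₁)*t) * Real.exp (-μ*t) = Real.exp (-c₁*t) := by
    rw [← Real.exp_add]; ring_nf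
  have hmm : Real.exp (μ*t) * Real.exp (-μ*t) = 1 := by
    rw [← Real.exp_add]; simp
  have h2 := mul_le_mul_of_nonneg_right hVt (le_of_lt (Real.exp_pos (-μ*t)))
  have hVt2 : V t ≤ (V 0 - β) * Real.exp (-μ*t) + β * Real.exp (-c₁*t) := by
    calc V t = V t * (Real.exp (μ*t) * Real.exp (-μ*t)) := by rw [hmm]; ring
      _ = (V t * Real.exp (μ*t)) * Real.exp (-μ*t) := by ring
      _ ≤ ((V 0 - β) + β * Real.exp ((μ-c₁)*t)) * Real.exp (-μ*t) := h2
      _ = (V 0 - β) * Real.exp (-μ*t) + β * (Real.exp ((μ-c₁)*t) * Real.exp (-μ*t)) := by ring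
      _ = (V 0 - β) * Real.exp (-μ*t) + β * Real.exp (-c₁*t) := by rw [hme]
  have e1 : 0 < Real.exp (-μ*t) := Real.exp_pos _
  have e2 : 0 < Real.exp (-c₁*t) := Real.exp_pos _
  nlinarith [abs_nonneg (V 0 - β), abs_nonneg β, le_abs_self (V 0 - β), le_abs_self β]

set_option maxHeartbeats 1000000 in
/-- Theorem 2 of the paper: under the observer-based active
fault/disturbance compensation controller, the closed-loop state
`x′ = Φ (x - H₁ e) + M f + M D H₂ e`, with `ΦᵀP + PΦ ≼ -2μP`, the Lipschitz
bound `‖f(t)‖ ≤ γ_f ‖H₁ e(t)‖`, `‖D(t)‖ ≤ D̄₁` and the observer error bound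
`‖e(t)‖² ≤ K exp(-c₁ t)`, converges to zero; indeed
`‖x(t)‖² ≤ C (exp(-μ t) + exp(-c₁ t))` for some constant `C ≥ 0`. -/
theorem stmt_11 (n r l q : ℕ) (hn : 0 < n) (hr : 0 < r) (hl : 0 < l) (hq : 0 < q)
    (Φ : Matrix (Fin n) (Fin n) ℝ) (M : Matrix (Fin n) (Fin r) ℝ)
    (H₁ : Matrix (Fin n) (Fin l) ℝ) (H₂ : Matrix (Fin q) (Fin l) ℝ)
    (γf Dbar K : ℝ) (hγf : 0 ≤ γf) (hDbar : 0 ≤ Dbar) (hK : 0 ≤ K)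
    (μ c₁ : ℝ) (hμ : 0 < μ) (hc₁ : 0 < c₁) (hμc₁ : μ ≠ c₁)
    (P : Matrix (Fin n) (Fin n) ℝ) (hPsymm : P.IsSymm) (hP : P.PosDef)
    (hLyap : ((-(2 * μ)) • P - (Φᵀ * P + P * Φ)).PosSemidef)
    (x : ℝ → Fin n → ℝ) (hx : Differentiable ℝ x)
    (e : ℝ → Fin l → ℝ) (f : ℝ → Fin r → ℝ)
    (D : ℝ → Matrix (Fin r) (Fin q) ℝ)
    (hode : ∀ t ≥ (0 : ℝ), deriv x t =
      Φ.mulVec (x t - H₁.mulVec (e t)) + M.mulVec (f t) +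
        (M * D t).mulVec (H₂.mulVec (e t)))
    (hf : ∀ t ≥ (0 : ℝ), Real.sqrt (∑ i, f t i ^ 2) ≤
      γf * Real.sqrt (∑ i, H₁.mulVec (e t) i ^ 2))
    (hD : ∀ t ≥ (0 : ℝ), specNorm (D t) ≤ Dbar)
    (he : ∀ t ≥ (0 : ℝ), (∑ i, e t i ^ 2) ≤ K * Real.exp (-c₁ * t)) :
    Filter.Tendsto x Filter.atTop (nhds 0) ∧
      ∃ C : ℝ, 0 ≤ C ∧ ∀ t ≥ (0 : ℝ),
        (∑ i, x t i ^ 2) ≤ C * (Real.exp (-μ * t) + Real.exp (-c₁ * t)) := by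
  obtain ⟨m, hm, hmlb⟩ := posdef_lb hn hP
  have hsP : 0 ≤ specNorm P := specNorm_nonneg P
  have hsΦ : 0 ≤ specNorm Φ := specNorm_nonneg Φ
  have hsM : 0 ≤ specNorm M := specNorm_nonneg M
  have hsH₁ : 0 ≤ specNorm H₁ := specNorm_nonneg H₁
  have hsH₂ : 0 ≤ specNorm H₂ := specNorm_nonneg H₂
  set L : ℝ := specNorm M * γf * specNorm H₁ + specNorm M * Dbar * specNorm H₂ +
    specNorm Φ * specNorm H₁ with hL
  have hL0 : 0 ≤ L := by positivity
  set B : ℝ := specNorm P ^ 2 * L ^ 2 * K / (m * μ) with hB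
  set V : ℝ → ℝ := fun t => x t ⬝ᵥ P.mulVec (x t) with hV
  have hVd : ∀ t, HasDerivAt V
      (deriv x t ⬝ᵥ P.mulVec (x t) + x t ⬝ᵥ P.mulVec (deriv x t)) t :=
    hasDerivAt_quadratic P x hx
  have hVdiff : Differentiable ℝ V := fun t => (hVd t).differentiableAt
  have hVlb : ∀ t, m * eN (x t) ^ 2 ≤ V t := by
    intro t
    rw [sq_eN]
    exact hmlb (x t)
  -- key derivative bound
  have hkey : ∀ t > (0:ℝ), deriv V t ≤ -μ * V t + B * Real.exp (-c₁ * t) := by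
    intro t ht
    have ht' : t ≥ 0 := ht.le
    have hdx := hode t ht'
    set w : Fin n → ℝ := deriv x t - Φ.mulVec (x t) with hw
    have hwx : deriv x t = Φ.mulVec (x t) + w := by
      rw [hw]; abel
    have hweq : w = M.mulVec (f t) + (M * D t).mulVec (H₂.mulVec (e t)) -
        Φ.mulVec (H₁.mulVec (e t)) := by
      rw [hw, hdx, Matrix.mulVec_sub]; abel
    -- bound on eN w
    have hee : eN (e t) ^ 2 ≤ K * Real.exp (-c₁*t) := by
      rw [sq_eN]; exact he t ht'
    have hf' : eN (f t) ≤ γf * eN (H₁.mulVec (e t)) := hf t ht'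
    have h1 : eN (M.mulVec (f t)) ≤ specNorm M * γf * specNorm H₁ * eN (e t) := by
      calc eN (M.mulVec (f t)) ≤ specNorm M * eN (f t) := eN_mulVec_le M _
        _ ≤ specNorm M * (γf * eN (H₁.mulVec (e t))) := by
            exact mul_le_mul_of_nonneg_left hf' hsM
        _ ≤ specNorm M * (γf * (specNorm H₁ * eN (e t))) := by
            have := eN_mulVec_le H₁ (e t)
            gcongr
        _ = specNorm M * γf * specNorm H₁ * eN (e t) := by ring
    have h2 : eN ((M * D t).mulVec (H₂.mulVec (e t))) ≤
        specNorm M * Dbar * specNorm H₂ * eN (e t) := by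
      rw [← Matrix.mulVec_mulVec]
      calc eN (M.mulVec ((D t).mulVec (H₂.mulVec (e t))))
          ≤ specNorm M * eN ((D t).mulVec (H₂.mulVec (e t))) := eN_mulVec_le M _
        _ ≤ specNorm M * (specNorm (D t) * eN (H₂.mulVec (e t))) := by
            have := eN_mulVec_le (D t) (H₂.mulVec (e t))
            gcongr
        _ ≤ specNorm M * (Dbar * (specNorm H₂ * eN (e t))) := by
            have h3 := eN_mulVec_le H₂ (e t)
            have h4 := hD t ht'
            have h5 := eN_nonneg (H₂.mulVec (e t))
            refine mul_le_mul_of_nonneg_left ?_ hsM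
            calc specNorm (D t) * eN (H₂.mulVec (e t)) ≤ Dbar * eN (H₂.mulVec (e t)) :=
                  mul_le_mul_of_nonneg_right h4 h5
              _ ≤ Dbar * (specNorm H₂ * eN (e t)) := mul_le_mul_of_nonneg_left h3 hDbar
        _ = specNorm M * Dbar * specNorm H₂ * eN (e t) := by ring
    have h3 : eN (Φ.mulVec (H₁.mulVec (e t))) ≤ specNorm Φ * specNorm H₁ * eN (e t) := by
      calc eN (Φ.mulVec (H₁.mulVec (e t))) ≤ specNorm Φ * eN (H₁.mulVec (e t)) :=
            eN_mulVec_le Φ _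
        _ ≤ specNorm Φ * (specNorm H₁ * eN (e t)) := by
            have := eN_mulVec_le H₁ (e t)
            gcongr
        _ = specNorm Φ * specNorm H₁ * eN (e t) := by ring
    have hwbound : eN w ≤ L * eN (e t) := by
      rw [hweq]
      calc eN (M.mulVec (f t) + (M * D t).mulVec (H₂.mulVec (e t)) -
          Φ.mulVec (H₁.mulVec (e t)))
          ≤ eN (M.mulVec (f t)) + eN ((M * D t).mulVec (H₂.mulVec (e t))) +
            eN (Φ.mulVec (H₁.mulVec (e t))) := eN_add3_sub _ _ _
        _ ≤ L * eN (e t) := by rw [hL]; linarith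
    have hw2 : eN w ^ 2 ≤ L ^ 2 * (K * Real.exp (-c₁*t)) := by
      have hwn := eN_nonneg w
      have hen := eN_nonneg (e t)
      nlinarith
    -- deriv V
    have hdV : deriv V t = deriv x t ⬝ᵥ P.mulVec (x t) + x t ⬝ᵥ P.mulVec (deriv x t) :=
      (hVd t).deriv
    have hsy : deriv x t ⬝ᵥ P.mulVec (x t) = x t ⬝ᵥ P.mulVec (deriv x t) :=
      dot_symm hPsymm _ _
    have hPw : x t ⬝ᵥ P.mulVec (deriv x t) =
        x t ⬝ᵥ P.mulVec (Φ.mulVec (x t)) + x t ⬝ᵥ P.mulVec w := by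
      rw [hwx, Matrix.mulVec_add, dotProduct_add]
    -- Lyapunov inequality
    have hLy : 2 * (x t ⬝ᵥ P.mulVec (Φ.mulVec (x t))) ≤ -(2*μ) * V t := by
      have h0 := hLyap.dotProduct_mulVec_nonneg (x t)
      simp only [Matrix.sub_mulVec, Matrix.add_mulVec, Matrix.smul_mulVec,
        dotProduct_sub, dotProduct_add, dotProduct_smul, star_trivial, smul_eq_mul] at h0
      have ha : x t ⬝ᵥ ((Φᵀ * P).mulVec (x t)) = x t ⬝ᵥ P.mulVec (Φ.mulVec (x t)) := by
        rw [← Matrix.mulVec_mulVec, Matrix.dotProduct_mulVec (x t) Φᵀ,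
          Matrix.vecMul_transpose]
        exact dot_symm hPsymm _ _
      have hb : x t ⬝ᵥ ((P * Φ).mulVec (x t)) = x t ⬝ᵥ P.mulVec (Φ.mulVec (x t)) := by
        rw [← Matrix.mulVec_mulVec]
      rw [ha, hb] at h0
      simp only [hV]
      linarith
    -- cross term bound
    have hmμ : (0:ℝ) < m * μ := mul_pos hm hμ
    set c2 : ℝ := specNorm P ^ 2 / (m * μ) with hc2
    have hc2m : c2 * (m * μ) = specNorm P ^ 2 := div_mul_cancel₀ _ hmμ.ne'
    have hcross : 2 * (x t ⬝ᵥ P.mulVec w) ≤ μ * V t + c2 * eN w ^ 2 := by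
      have hd1 : |x t ⬝ᵥ P.mulVec w| ≤ eN (x t) * (specNorm P * eN w) := by
        calc |x t ⬝ᵥ P.mulVec w| ≤ eN (x t) * eN (P.mulVec w) := abs_dot_le _ _
          _ ≤ eN (x t) * (specNorm P * eN w) := by
              have := eN_mulVec_le P w
              gcongr
              exact eN_nonneg (x t)
      have hd2 : x t ⬝ᵥ P.mulVec w ≤ eN (x t) * (specNorm P * eN w) :=
        le_trans (le_abs_self _) hd1
      have hlb := hVlb t
      have hstep : (m*μ) * (2 * (x t ⬝ᵥ P.mulVec w)) ≤
          (m*μ) * (μ * V t) + specNorm P ^ 2 * eN w ^ 2 := by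
        nlinarith [sq_nonneg (μ * m * eN (x t) - specNorm P * eN w),
          mul_le_mul_of_nonneg_left hd2 (by positivity : (0:ℝ) ≤ 2*(m*μ)),
          mul_le_mul_of_nonneg_left hlb (by positivity : (0:ℝ) ≤ μ^2*m)]
      have h9 : 2 * (x t ⬝ᵥ P.mulVec w) ≤
          μ * V t + specNorm P ^ 2 * eN w ^ 2 / (m*μ) := by
        rw [← mul_le_mul_iff_right₀ hmμ]
        calc (m*μ) * (2 * (x t ⬝ᵥ P.mulVec w))
            ≤ (m*μ) * (μ * V t) + specNorm P ^ 2 * eN w ^ 2 := hstep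
          _ = (m*μ) * (μ * V t + specNorm P ^ 2 * eN w ^ 2 / (m*μ)) := by
              field_simp
      calc 2 * (x t ⬝ᵥ P.mulVec w)
          ≤ μ * V t + specNorm P ^ 2 * eN w ^ 2 / (m*μ) := h9
        _ = μ * V t + c2 * eN w ^ 2 := by rw [hc2]; ring
    have hBe : c2 * (L ^ 2 * (K * Real.exp (-c₁*t))) = B * Real.exp (-c₁*t) := by
      rw [hc2, hB]; ring
    have hc2nn : 0 ≤ c2 := by positivity
    calc deriv V t = 2 * (x t ⬝ᵥ P.mulVec (Φ.mulVec (x t))) + 2 * (x t ⬝ᵥ P.mulVec w) := by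
          rw [hdV, hsy, hPw]; ring
      _ ≤ -(2*μ) * V t + (μ * V t + c2 * eN w ^ 2) := by linarith
      _ ≤ -(2*μ) * V t + (μ * V t + c2 * (L ^ 2 * (K * Real.exp (-c₁*t)))) := by
          have := mul_le_mul_of_nonneg_left hw2 hc2nn
          linarith
      _ = -μ * V t + B * Real.exp (-c₁*t) := by rw [hBe]; ring
  -- apply Grönwall
  have hgron := gronwall_aux μ c₁ B hμ hμc₁ V hVdiff hkey
  set C' : ℝ := |V 0 - B/(μ-c₁)| + |B/(μ-c₁)| with hC'
  have hC'0 : 0 ≤ C' := by positivity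
  set C : ℝ := C' / m with hC
  have hC0 : 0 ≤ C := by positivity
  have hbound : ∀ t ≥ (0:ℝ), (∑ i, x t i ^ 2) ≤ C * (Real.exp (-μ*t) + Real.exp (-c₁*t)) := by
    intro t ht
    have h1 := hgron t ht
    have h2 := hVlb t
    rw [sq_eN] at h2
    rw [hC]
    rw [div_mul_eq_mul_div, le_div_iff₀ hm]
    nlinarith
  refine ⟨?_, C, hC0, hbound⟩
  -- convergence
  have hbnd0 : Filter.Tendsto (fun t => C * (Real.exp (-μ*t) + Real.exp (-c₁*t)))
      Filter.atTop (nhds 0) := by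
    have e1 : Filter.Tendsto (fun t : ℝ => Real.exp (-μ*t)) Filter.atTop (nhds 0) := by
      have : Filter.Tendsto (fun t : ℝ => -μ*t) Filter.atTop Filter.atBot :=
        Filter.tendsto_id.const_mul_atTop_of_neg (by linarith)
      exact Real.tendsto_exp_atBot.comp this
    have e2 : Filter.Tendsto (fun t : ℝ => Real.exp (-c₁*t)) Filter.atTop (nhds 0) := by
      have : Filter.Tendsto (fun t : ℝ => -c₁*t) Filter.atTop Filter.atBot :=
        Filter.tendsto_id.const_mul_atTop_of_neg (by linarith)
      exact Real.tendsto_exp_atBot.comp this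
    have := (e1.add e2).const_mul C
    simpa using this
  rw [tendsto_pi_nhds]
  intro i
  have hsq : Filter.Tendsto (fun t => (x t i) ^ 2) Filter.atTop (nhds 0) := by
    apply squeeze_zero' (Filter.Eventually.of_forall fun t => sq_nonneg _)
      ?_ hbnd0
    filter_upwards [Filter.eventually_ge_atTop (0:ℝ)] with t ht
    calc (x t i) ^ 2 ≤ ∑ j, x t j ^ 2 :=
          Finset.single_le_sum (f := fun j => x t j ^ 2) (fun j _ => sq_nonneg _)
            (Finset.mem_univ i)
      _ ≤ C * (Real.exp (-μ*t) + Real.exp (-c₁*t)) := hbound t ht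
  have habs : Filter.Tendsto (fun t => |x t i|) Filter.atTop (nhds 0) := by
    have := hsq.sqrt
    simpa [Real.sqrt_sq_eq_abs] using this
  exact (tendsto_zero_iff_abs_tendsto_zero _).2 habs
end

section
/- Let ε₁, ε₂, ε₃ ∈ ℝ with ε₁ ≠ 0, and let z, θ, u, d : ℝ → ℝ be functions with z and θ each twice differentiable, such that for all t ∈ ℝ: z″(t) = ε₁·sin θ(t), θ″(t) = ε₂·θ′(t) + ε₃·(u(t) + d(t)), and θ(t) ∈ (−π/2, π/2). Define x = z/ε₁. Then x is four times differentiable, and for all t: x″(t) = sin θ(t), x‴(t) = √(1 − x″(t)²)·θ′(t), and x⁗(t) = ε₂·x‴(t) − (x‴(t)²·x″(t))/(1 − x″(t)²) + ε₃·√(1 − x″(t)²)·(u(t) + d(t)). -/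
open Real

/-- Transformation of the Quanser Ball and Beam dynamics
`z″ = ε₁ sin θ`, `θ″ = ε₂ θ′ + ε₃ (u + d)` with `θ(t) ∈ (-π/2, π/2)` into the
fourth-order fully actuated system model (equation (24) of the paper), via
`x = z / ε₁`: `x` is four times differentiable, with `x″ = sin θ`,
`x‴ = √(1 - x″²) θ′` and
`x⁗ = ε₂ x‴ - x‴² x″ / (1 - x″²) + ε₃ √(1 - x″²) (u + d)`. -/
theorem stmt_12 (ε₁ ε₂ ε₃ : ℝ) (hε₁ : ε₁ ≠ 0)
    (z θ u d : ℝ → ℝ)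
    (hz1 : Differentiable ℝ z) (hz2 : Differentiable ℝ (deriv z))
    (hθ1 : Differentiable ℝ θ) (hθ2 : Differentiable ℝ (deriv θ))
    (hzeq : ∀ t, deriv (deriv z) t = ε₁ * Real.sin (θ t))
    (hθeq : ∀ t, deriv (deriv θ) t = ε₂ * deriv θ t + ε₃ * (u t + d t))
    (hθmem : ∀ t, θ t ∈ Set.Ioo (-(Real.pi / 2)) (Real.pi / 2))
    (x : ℝ → ℝ) (hx : x = fun t => z t / ε₁) :
    (∀ k < 4, Differentiable ℝ (iteratedDeriv k x)) ∧
    (∀ t, iteratedDeriv 2 x t = Real.sin (θ t)) ∧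
    (∀ t, iteratedDeriv 3 x t =
      Real.sqrt (1 - iteratedDeriv 2 x t ^ 2) * deriv θ t) ∧
    (∀ t, iteratedDeriv 4 x t =
      ε₂ * iteratedDeriv 3 x t -
        iteratedDeriv 3 x t ^ 2 * iteratedDeriv 2 x t /
          (1 - iteratedDeriv 2 x t ^ 2) +
        ε₃ * Real.sqrt (1 - iteratedDeriv 2 x t ^ 2) * (u t + d t)) := by

  have hdx : deriv x = fun t => deriv z t / ε₁ := by
    funext t; rw [hx]; exact deriv_div_const _
  have hddx : deriv (deriv x) = fun t => Real.sin (θ t) := by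
    funext t
    rw [hdx]
    rw [deriv_div_const, hzeq t]
    field_simp
  have h2 : iteratedDeriv 2 x = fun t => Real.sin (θ t) := by
    rw [show (2:ℕ) = 1 + 1 from rfl, iteratedDeriv_succ, iteratedDeriv_one, hddx]
  have h3 : iteratedDeriv 3 x = fun t => Real.cos (θ t) * deriv θ t := by
    rw [show (3:ℕ) = 2 + 1 from rfl, iteratedDeriv_succ, h2]
    funext t
    exact ((Real.hasDerivAt_sin (θ t)).comp t (hθ1 t).hasDerivAt).deriv
  have h4 : iteratedDeriv 4 x = fun t =>
      -Real.sin (θ t) * deriv θ t * deriv θ t + Real.cos (θ t) * deriv (deriv θ) t := by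
    rw [show (4:ℕ) = 3 + 1 from rfl, iteratedDeriv_succ, h3]
    funext t
    exact (((Real.hasDerivAt_cos (θ t)).comp t (hθ1 t).hasDerivAt).mul
      (hθ2 t).hasDerivAt).deriv
  have hcos : ∀ t, 0 < Real.cos (θ t) := fun t => Real.cos_pos_of_mem_Ioo (hθmem t)
  have hone : ∀ t, 1 - Real.sin (θ t) ^ 2 = Real.cos (θ t) ^ 2 := by
    intro t; have := Real.sin_sq_add_cos_sq (θ t); linarith
  have hsqrt : ∀ t, Real.sqrt (1 - Real.sin (θ t) ^ 2) = Real.cos (θ t) := by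
    intro t; rw [hone t, Real.sqrt_sq (hcos t).le]
  refine ⟨?_, ?_, ?_, ?_⟩
  · intro k hk
    interval_cases k
    · rw [iteratedDeriv_zero, hx]; exact hz1.div_const _
    · rw [iteratedDeriv_one, hdx]; exact hz2.div_const _
    · rw [h2]; exact Real.differentiable_sin.comp hθ1
    · rw [h3]; exact (Real.differentiable_cos.comp hθ1).mul hθ2
  · intro t; rw [h2]
  · intro t; rw [h3, h2]; simp only [hsqrt t]
  · intro t
    rw [h4, h3, h2]
    beta_reduce
    rw [hθeq t, hsqrt t, hone t]
    have hc := (hcos t).ne'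
    field_simp
    ring
end
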